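/- arXiv:1905.10451 — 6 statements merged into one kernel-verified Lean document; each statement's English description precedes it below -/
import Mathlib

section
/- Let S be a finite intersection-closed collection of finite sets with |S| > 1, containing the empty set and its union X_S = ⋃_{A∈S} A. For p ∈ X_S, write S_p = {A ∈ S : p ∈ A}. Then |S_p| ≤ |S|/2 if and only if there exists an intersection-closed subcollection Ŝ ⊆ S with ∅, X_S ∈ Ŝ such that |Ŝ_p| = |Ŝ|/2 and p ∉ A for every A ∈ S \ Ŝ. -/
lemma stmt0_aux {α : Type*} [DecidableEq α] (n : ℕ) :
    ∀ S : Finset (Finset α), S.card ≤ n → ∅ ∈ S → S.sup id ∈ S →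
      (∀ A ∈ S, ∀ B ∈ S, A ∩ B ∈ S) → ∀ p : α, p ∈ S.sup id →
      2 * (S.filter (fun A => p ∈ A)).card ≤ S.card →
      ∃ T ⊆ S, ∅ ∈ T ∧ S.sup id ∈ T ∧ (∀ A ∈ T, ∀ B ∈ T, A ∩ B ∈ T) ∧
        2 * (T.filter (fun A => p ∈ A)).card = T.card ∧
        ∀ A ∈ S, A ∉ T → p ∉ A := by
  induction n with
  | zero =>
      intro S hSn hempty _ _ _ _ _
      exact absurd (Finset.card_pos.mpr ⟨∅, hempty⟩) (by omega)
  | succ n ih =>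
      intro S hSn hempty hXS hclosed p hp hle
      rcases eq_or_lt_of_le hle with heq | hlt
      · exact ⟨S, subset_rfl, hempty, hXS, hclosed, heq,
          fun A hA hA' => absurd hA hA'⟩
      · -- there is a nonempty set not containing p
        have hXp : S.sup id ∈ S.filter (fun A => p ∈ A) :=
          Finset.mem_filter.mpr ⟨hXS, hp⟩
        have ha1 : 1 ≤ (S.filter (fun A => p ∈ A)).card :=
          Finset.card_pos.mpr ⟨_, hXp⟩
        set U := S.filter (fun A => p ∉ A ∧ A ≠ ∅) with hU
        have hUne : U.Nonempty := by
          by_contra hcon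
          have hUe : U = ∅ := Finset.not_nonempty_iff_eq_empty.mp hcon
          have hsub : S.filter (fun A => p ∉ A) ⊆ {∅} := by
            intro A hA
            rcases Finset.mem_filter.mp hA with ⟨hAS, hpA⟩
            by_contra hne
            have : A ∈ U := Finset.mem_filter.mpr
              ⟨hAS, hpA, by simpa using hne⟩
            simp [hUe] at this
          have h1 : (S.filter (fun A => p ∉ A)).card ≤ 1 := by
            simpa using Finset.card_le_card hsub
          have hsplit := Finset.card_filter_add_card_filter_not
            (s := S) (p := fun A => p ∈ A)
          omega
        obtain ⟨B, hBU, hBmax⟩ := U.exists_max_image (fun A => A.card) hUne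
        rcases Finset.mem_filter.mp hBU with ⟨hBS, hpB, hBne⟩
        set S' := S.erase B with hS'
        have hXne : S.sup id ≠ B := fun h => hpB (h ▸ hp)
        have hXS' : S.sup id ∈ S' := Finset.mem_erase.mpr ⟨hXne, hXS⟩
        have hsup : S'.sup id = S.sup id := by
          apply le_antisymm (Finset.sup_mono (Finset.erase_subset _ _))
          exact Finset.le_sup (f := id) hXS'
        have hempty' : ∅ ∈ S' :=
          Finset.mem_erase.mpr ⟨fun h => hBne h.symm, hempty⟩
        have hcardS' : S'.card = S.card - 1 := Finset.card_erase_of_mem hBS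
        have hclosed' : ∀ A ∈ S', ∀ C ∈ S', A ∩ C ∈ S' := by
          intro A hA C hC
          rcases Finset.mem_erase.mp hA with ⟨hAne, hAS⟩
          rcases Finset.mem_erase.mp hC with ⟨hCne, hCS⟩
          refine Finset.mem_erase.mpr ⟨?_, hclosed A hAS C hCS⟩
          intro hACB
          have key : ∀ D ∈ S, D ≠ B → B ⊆ D → p ∈ D := by
            intro D hDS hDne hBD
            by_contra hpD
            have hDU : D ∈ U := Finset.mem_filter.mpr
              ⟨hDS, hpD, fun h => hBne (Finset.subset_empty.mp (h ▸ hBD))⟩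
            exact hDne (Finset.eq_of_subset_of_card_le hBD (hBmax D hDU)).symm
          have hpA : p ∈ A := key A hAS hAne (hACB ▸ Finset.inter_subset_left)
          have hpC : p ∈ C := key C hCS hCne (hACB ▸ Finset.inter_subset_right)
          exact hpB (hACB ▸ Finset.mem_inter.mpr ⟨hpA, hpC⟩)
        have hfilter : S'.filter (fun A => p ∈ A) = S.filter (fun A => p ∈ A) := by
          rw [hS', Finset.filter_erase]
          exact Finset.erase_eq_of_notMem (by simp [hpB])
        have hle' : 2 * (S'.filter (fun A => p ∈ A)).card ≤ S'.card := by
          rw [hfilter, hcardS']; omega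
        have hp' : p ∈ S'.sup id := hsup ▸ hp
        obtain ⟨T, hTsub, hTe, hTsup, hTcl, hTcard, hTlast⟩ :=
          ih S' (by omega) hempty' (hsup ▸ hXS') hclosed' p hp' hle'
        refine ⟨T, hTsub.trans (Finset.erase_subset _ _), hTe,
          hsup ▸ hTsup, hTcl, hTcard, ?_⟩
        intro A hAS hAT
        by_cases hAB : A = B
        · exact hAB ▸ hpB
        · exact hTlast A (Finset.mem_erase.mpr ⟨hAB, hAS⟩) hAT

/-- Lemma 1: for a finite intersection-closed family `S` containing `∅` and its union
`X_S = S.sup id`, and `p ∈ X_S`, we have `|S_p| ≤ |S|/2` iff there is an intersection-closed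
subfamily `Ŝ ⊆ S` containing `∅` and `X_S` with `|Ŝ_p| = |Ŝ|/2` and `p ∉ A` for all
`A ∈ S \ Ŝ`. -/
theorem stmt0 {α : Type*} [DecidableEq α] (S : Finset (Finset α))
    (hcard : 1 < S.card) (hempty : ∅ ∈ S) (hXS : S.sup id ∈ S)
    (hclosed : ∀ A ∈ S, ∀ B ∈ S, A ∩ B ∈ S)
    (p : α) (hp : p ∈ S.sup id) :
    2 * (S.filter (fun A => p ∈ A)).card ≤ S.card ↔
      ∃ T ⊆ S, ∅ ∈ T ∧ S.sup id ∈ T ∧ (∀ A ∈ T, ∀ B ∈ T, A ∩ B ∈ T) ∧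
        2 * (T.filter (fun A => p ∈ A)).card = T.card ∧
        ∀ A ∈ S, A ∉ T → p ∉ A := by
  constructor
  · intro hle
    exact stmt0_aux S.card S le_rfl hempty hXS hclosed p hp hle
  · rintro ⟨T, hTsub, _, _, _, hTcard, hlast⟩
    have hfil : S.filter (fun A => p ∈ A) = T.filter (fun A => p ∈ A) := by
      apply Finset.Subset.antisymm
      · intro A hA
        rcases Finset.mem_filter.mp hA with ⟨hAS, hpA⟩
        refine Finset.mem_filter.mpr ⟨?_, hpA⟩
        by_contra hAT
        exact hlast A hAS hAT hpA
      · exact Finset.filter_subset_filter _ hTsub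
    rw [hfil, hTcard]
    exact Finset.card_le_card hTsub
end

section
/- Suppose that for every n ≥ 1 and every multiplicative submonoid M of F_2^n containing 0 and 1, there exists an involution T : M → M such that the ideal generated by {x·T(x) : x ∈ M} is proper. Then the intersection-closed sets conjecture holds: for every finite intersection-closed family S of subsets of a finite set X with ∅, X ∈ S and |S| > 1, there is a point p ∈ X lying in at most half of the sets in S. -/
/-!
Encode each set of `S` by its characteristic vector in `𝔽₂ⁿ`; since `S` is closed under
intersection and contains `∅` and `X`, these vectors form a submonoid `M` containing `0` and `1`.
A proper ideal of `𝔽₂ⁿ` lies in a coordinate hyperplane `{y | y i = 0}`, so a pseudocomplement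
`T` of `M` satisfies `x i * (T x) i = 0` for all `x ∈ M`: the injective map `T` sends the sets
containing the point `i` to sets avoiding it. Hence at most half of the sets of `S` contain `i`.
-/

open Finset

theorem Finset.two_mul_card_filter_le_of_injOn {α : Type*} {S : Finset α} {p : α → Prop}
    [DecidablePred p] (f : α → α) (hf : ∀ a ∈ S, p a → f a ∈ S ∧ ¬p (f a))
    (hinj : Set.InjOn f (S.filter p)) : 2 * (S.filter p).card ≤ S.card := by
  have hle : (S.filter p).card ≤ (S.filter (¬p ·)).card :=
    card_le_card_of_injOn f (fun a ha ↦ by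
      obtain ⟨haS, hpa⟩ := mem_filter.mp ha
      exact mem_filter.mpr (hf a haS hpa)) hinj
  have := card_filter_add_card_filter_not (s := S) p
  omega

theorem Ideal.exists_forall_apply_eq_zero_of_ne_top {ι K : Type*} [Fintype ι] [DecidableEq ι]
    [Field K] {I : Ideal (ι → K)} (hI : I ≠ ⊤) : ∃ i, ∀ y ∈ I, y i = 0 := by
  by_contra! h
  choose y hyI hy using h
  refine hI (I.eq_top_iff_one.mpr ?_)
  have hsum : ∑ i, Pi.single i (y i i)⁻¹ * y i = 1 := by
    simp_rw [← Pi.single_mul_left, inv_mul_cancel₀ (hy _)]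
    exact univ_sum_single 1
  exact hsum ▸ I.sum_mem fun i _ ↦ I.mul_mem_left _ (hyI i)

section CharVec

variable {ι X : Type*} [Fintype X] [DecidableEq X]

def finsetEquivZModTwo (e : ι ≃ X) : Finset X ≃ (ι → ZMod 2) where
  toFun A i := if e i ∈ A then 1 else 0
  invFun v := univ.filter fun x ↦ v (e.symm x) = 1
  left_inv A := by ext; simp
  right_inv v := by
    funext i
    simp only [mem_filter, mem_univ, true_and, Equiv.symm_apply_apply]
    split_ifs with h
    · exact h.symm
    · -- every element of `ZMod 2` is `0` or `1`
      generalize v i = a at h ⊢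
      revert a; decide

variable (e : ι ≃ X)

theorem finsetEquivZModTwo_apply_eq_one {A : Finset X} {i : ι} :
    finsetEquivZModTwo e A i = 1 ↔ e i ∈ A := by
  simp [finsetEquivZModTwo]

theorem finsetEquivZModTwo_symm_mul (v w : ι → ZMod 2) :
    (finsetEquivZModTwo e).symm (v * w) =
      (finsetEquivZModTwo e).symm v ∩ (finsetEquivZModTwo e).symm w := by
  ext x
  simp only [finsetEquivZModTwo, Equiv.coe_fn_symm_mk, mem_filter, mem_univ, true_and,
    mem_inter, Pi.mul_apply]
  generalize v (e.symm x) = a; generalize w (e.symm x) = b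
  revert a b; decide

theorem finsetEquivZModTwo_symm_one : (finsetEquivZModTwo e).symm 1 = univ := by
  ext; simp [finsetEquivZModTwo]

theorem finsetEquivZModTwo_symm_zero : (finsetEquivZModTwo e).symm 0 = ∅ := by
  ext; simp [finsetEquivZModTwo]

def charVecSubmonoid (S : Finset (Finset X)) (hinter : ∀ A ∈ S, ∀ B ∈ S, A ∩ B ∈ S)
    (huniv : univ ∈ S) : Submonoid (ι → ZMod 2) where
  carrier := {v | (finsetEquivZModTwo e).symm v ∈ S}
  one_mem' := by simpa [finsetEquivZModTwo_symm_one] using huniv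
  mul_mem' {v w} hv hw := by
    simpa [finsetEquivZModTwo_symm_mul] using hinter _ hv _ hw

theorem mem_charVecSubmonoid {S : Finset (Finset X)} {hinter : ∀ A ∈ S, ∀ B ∈ S, A ∩ B ∈ S}
    {huniv : univ ∈ S} {v : ι → ZMod 2} :
    v ∈ charVecSubmonoid e S hinter huniv ↔ (finsetEquivZModTwo e).symm v ∈ S :=
  Iff.rfl

end CharVec

theorem Fintype.card_pos_of_one_lt_card_finset {X : Type*} [Fintype X] {S : Finset (Finset X)}
    (hS : 1 < S.card) : 0 < Fintype.card X := by
  by_contra! h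
  have := S.card_le_univ
  rw [Fintype.card_finset, Nat.le_zero.mp h, pow_zero] at this
  omega

/-- If for every `n ≥ 1` every multiplicative submonoid of `𝔽₂ⁿ` containing `0` and `1`
admits a pseudocomplement (an involution `T` whose quadratic ideal is proper), then the
intersection-closed sets conjecture holds. -/
theorem stmt5
    (H : ∀ n : ℕ, 1 ≤ n → ∀ M : Submonoid (Fin n → ZMod 2), (0 : Fin n → ZMod 2) ∈ M →
      ∃ T : (Fin n → ZMod 2) → (Fin n → ZMod 2),
        (∀ x ∈ M, T x ∈ M) ∧ (∀ x ∈ M, T (T x) = x) ∧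
        Ideal.span {y : Fin n → ZMod 2 | ∃ x ∈ M, y = x * T x} ≠ ⊤) :
    ∀ (X : Type) [Fintype X] [DecidableEq X] (S : Finset (Finset X)),
      (∀ A ∈ S, ∀ B ∈ S, A ∩ B ∈ S) → ∅ ∈ S → Finset.univ ∈ S → 1 < S.card →
      ∃ p : X, 2 * (S.filter (fun A => p ∈ A)).card ≤ S.card := by
  intro X _ _ S hinter hempty huniv hcard
  set e := (Fintype.equivFin X).symm
  set χ := finsetEquivZModTwo e
  set M := charVecSubmonoid e S hinter huniv
  have hχM : ∀ A ∈ S, χ A ∈ M := by simp [M, mem_charVecSubmonoid, χ]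
  have h0M : (0 : Fin _ → ZMod 2) ∈ M := by
    simpa [M, mem_charVecSubmonoid, finsetEquivZModTwo_symm_zero]
  obtain ⟨T, hTM, hTT, hproper⟩ := H _ (Fintype.card_pos_of_one_lt_card_finset hcard) M h0M
  obtain ⟨i, hi⟩ := Ideal.exists_forall_apply_eq_zero_of_ne_top hproper
  have hT_avoid (A : Finset X) (hA : A ∈ S) (hiA : e i ∈ A) : e i ∉ χ.symm (T (χ A)) := by
    have hprod : χ A i * T (χ A) i = 0 := hi _ (Ideal.subset_span ⟨_, hχM A hA, rfl⟩)
    rw [(finsetEquivZModTwo_apply_eq_one e).mpr hiA, one_mul] at hprod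
    rw [← finsetEquivZModTwo_apply_eq_one e, Equiv.apply_symm_apply, hprod]
    decide
  have hT_inj : Set.InjOn (χ.symm ∘ T ∘ χ) (S.filter (e i ∈ ·)) := by
    intro A hA B hB hAB
    have hA := hχM A (mem_filter.mp hA).1
    have hB := hχM B (mem_filter.mp hB).1
    have hT : T (χ A) = T (χ B) := χ.symm.injective hAB
    exact χ.injective (by rw [← hTT _ hA, ← hTT _ hB, hT])
  exact ⟨e i, two_mul_card_filter_le_of_injOn _
    (fun A hA hiA ↦ ⟨hTM _ (hχM A hA), hT_avoid A hA hiA⟩) hT_inj⟩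
end

section
/- For every prime p > 2 and every n ≥ 1, the symmetric multiaction on F_p^n is not a monoidal network. Concretely: if n > 1, let M = (F_p^n)^× ∪ {0}; then there is no proper nonzero ideal I of F_p^n with an extended submonoid M̂ ⊆ M satisfying M \ M̂ ⊆ I and the lifting property that every bijection of π(M̂) lifts along the projection π : F_p^n → F_p^n/I to a bijection of F_p^n stabilizing M̂. The key counting fact: if every permutation of π(M) lifts, then all fibers π^{-1}(a) ∩ M (a ∈ π(M)) have equal cardinality, which forces (p−1)^n + 1 = (p−1)^m + 1 where F_p^n/I ≅ F_p^m with m < n, hence p = 2. -/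
/-!
Swap the classes of `1` and `0` in `R/I`; this permutation stabilizes `π(M̂)`, so it has a
lift `g̃` stabilizing `M̂`. Since `M̂` consists of units and `0`, and no unit lies in the proper
ideal `I`, the only element of `M̂` over `0` is `0` itself, so `g̃` maps the fibre of `M̂` over
`π 1` injectively into a singleton. But for `p > 2` that fibre contains both `1` and the unit
`1 + eⱼ`, where `eⱼ` is a standard idempotent lying in `I` (every nonzero ideal of `𝔽ₚⁿ`
contains one).
-/

open Function Set

theorem Equiv.swap_image_eq_self {α : Type*} [DecidableEq α] {s : Set α} {a b : α}
    (ha : a ∈ s) (hb : b ∈ s) : swap a b '' s = s := by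
  have hmaps : MapsTo (swap a b) s s := fun x hx => by
    rcases eq_or_ne x a with rfl | hxa
    · simpa using hb
    rcases eq_or_ne x b with rfl | hxb
    · simpa using ha
    · rwa [swap_apply_of_ne_of_ne hxa hxb]
  exact hmaps.image_subset.antisymm fun x hx => ⟨swap a b x, hmaps hx, swap_apply_self a b x⟩

theorem Set.Subsingleton.of_lift {α β : Type*} {π : α → β} {s : Set α} {g : β → β}
    {g' : α → α} (hg' : Injective g') (hmaps : MapsTo g' s s)
    (hcomm : ∀ x ∈ s, π (g' x) = g (π x)) {b : β} (h : (s ∩ π ⁻¹' {g b}).Subsingleton) :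
    (s ∩ π ⁻¹' {b}).Subsingleton := by
  rintro x ⟨hxs, hx⟩ y ⟨hys, hy⟩
  refine hg' (h ⟨hmaps hxs, ?_⟩ ⟨hmaps hys, ?_⟩) <;> simp_all

section CommRing

variable {R : Type*} [CommRing R] {I : Ideal R} {M : Set R}

theorem subsingleton_inter_mk_preimage_zero (hI : I ≠ ⊤) (hM : M ⊆ {x | IsUnit x} ∪ {0}) :
    (M ∩ Ideal.Quotient.mk I ⁻¹' {0}).Subsingleton := by
  refine Set.subsingleton_of_subset_singleton (a := 0) fun x ⟨hxM, hxI⟩ => ?_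
  rw [mem_preimage, mem_singleton_iff, Ideal.Quotient.eq_zero_iff_mem] at hxI
  exact (hM hxM).resolve_left fun hu => hI (I.eq_top_of_isUnit_mem hxI hu)

end CommRing

section PiField

variable {ι : Type*} [DecidableEq ι] {K : ι → Type*} [∀ i, Field (K i)]

theorem Ideal.exists_single_one_mem_of_ne_bot {I : Ideal (∀ i, K i)} (hI : I ≠ ⊥) :
    ∃ j, Pi.single j 1 ∈ I := by
  obtain ⟨y, hyI, hy0⟩ := Submodule.exists_mem_ne_zero_of_ne_bot hI
  obtain ⟨j, hj⟩ := ne_iff.mp hy0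
  refine ⟨j, ?_⟩
  have := I.mul_mem_left (Pi.single j (y j)⁻¹) hyI
  rwa [← Pi.single_mul_left, inv_mul_cancel₀ hj] at this

theorem isUnit_one_add_single_one {j : ι} (h2 : (2 : K j) ≠ 0) :
    IsUnit (1 + Pi.single j 1 : ∀ i, K i) := by
  refine Pi.isUnit_iff.mpr fun i => isUnit_iff_ne_zero.mpr ?_
  rcases eq_or_ne i j with rfl | hij
  · simpa [one_add_one_eq_two] using h2
  · simp [Pi.single_eq_of_ne hij]

theorem one_add_single_one_ne_one (j : ι) : (1 + Pi.single j 1 : ∀ i, K i) ≠ 1 := by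
  simp [Pi.single_eq_zero_iff]

end PiField

theorem stmt7_general (p : ℕ) [Fact p.Prime] (hp : 2 < p) (n : ℕ) :
    ¬ ∃ (I : Ideal (Fin n → ZMod p)) (Mhat : Submonoid (Fin n → ZMod p)),
        I ≠ ⊥ ∧ I ≠ ⊤ ∧
        (∀ c : ZMod p, (fun _ => c : Fin n → ZMod p) ∈ Mhat) ∧
        (Mhat : Set (Fin n → ZMod p)) ⊆ {x | IsUnit x} ∪ {0} ∧
        (∀ x ∈ ({x | IsUnit x} ∪ {0} : Set (Fin n → ZMod p)) \ Mhat, x ∈ I) ∧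
        (∀ g : Equiv.Perm ((Fin n → ZMod p) ⧸ I),
          ⇑g '' (Ideal.Quotient.mk I '' (Mhat : Set (Fin n → ZMod p)))
              = Ideal.Quotient.mk I '' (Mhat : Set (Fin n → ZMod p)) →
          ∃ g' : Equiv.Perm (Fin n → ZMod p),
            ⇑g' '' (Mhat : Set (Fin n → ZMod p)) = (Mhat : Set (Fin n → ZMod p)) ∧
            ∀ x ∈ Mhat, Ideal.Quotient.mk I (g' x) = g (Ideal.Quotient.mk I x)) := by
  classical
  rintro ⟨I, Mhat, hIbot, hItop, hconst, hMsub, hcov, hlift⟩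
  set π := Ideal.Quotient.mk I
  obtain ⟨j, hjI⟩ := Ideal.exists_single_one_mem_of_ne_bot hIbot
  have h2 : (2 : ZMod p) ≠ 0 := Ring.two_ne_zero (by rw [ZMod.ringChar_zmod_n]; omega)
  set x : Fin n → ZMod p := 1 + Pi.single j 1
  have hxunit : IsUnit x := isUnit_one_add_single_one h2
  have hxM : x ∈ Mhat := by
    by_contra hxM
    exact hItop (I.eq_top_of_isUnit_mem (hcov x ⟨Or.inl hxunit, hxM⟩) hxunit)
  have hπx : π x = π 1 := by
    rw [Ideal.Quotient.eq]
    simpa [x] using hjI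
  have h0M : (0 : Fin n → ZMod p) ∈ Mhat := hconst 0
  obtain ⟨g', hg'M, hg'π⟩ := hlift (Equiv.swap (π 1) 0)
    (Equiv.swap_image_eq_self ⟨1, Mhat.one_mem, rfl⟩ ⟨0, h0M, map_zero π⟩)
  have hfibre : ((Mhat : Set _) ∩ π ⁻¹' {π 1}).Subsingleton :=
    Set.Subsingleton.of_lift g'.injective ((mapsTo_image g' _).mono_right hg'M.le) hg'π
      (by simpa using subsingleton_inter_mk_preimage_zero hItop hMsub)
  exact one_add_single_one_ne_one j (hfibre ⟨hxM, hπx⟩ ⟨Mhat.one_mem, rfl⟩)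

/-- For a prime `p > 2` and `n > 1`, the extended submonoid `M = (𝔽ₚⁿ)ˣ ∪ {0}` has no
proper nonzero covering ideal under the symmetric multiaction: there is no proper nonzero
ideal `I` together with an extended submonoid `M̂ ⊆ M` with `M \ M̂ ⊆ I` such that every
permutation of `𝔽ₚⁿ/I` stabilizing `π(M̂)` lifts along `π` to a permutation of `𝔽ₚⁿ`
stabilizing `M̂`.  In particular `Γ^sym (𝔽ₚⁿ)` is not a monoidal network. -/
theorem stmt7 (p : ℕ) [Fact p.Prime] (hp : 2 < p) (n : ℕ) (hn : 1 < n) :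
    ¬ ∃ (I : Ideal (Fin n → ZMod p)) (Mhat : Submonoid (Fin n → ZMod p)),
        I ≠ ⊥ ∧ I ≠ ⊤ ∧
        (∀ c : ZMod p, (fun _ => c : Fin n → ZMod p) ∈ Mhat) ∧
        (Mhat : Set (Fin n → ZMod p)) ⊆ {x | IsUnit x} ∪ {0} ∧
        (∀ x ∈ ({x | IsUnit x} ∪ {0} : Set (Fin n → ZMod p)) \ Mhat, x ∈ I) ∧
        (∀ g : Equiv.Perm ((Fin n → ZMod p) ⧸ I),
          ⇑g '' (Ideal.Quotient.mk I '' (Mhat : Set (Fin n → ZMod p)))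
              = Ideal.Quotient.mk I '' (Mhat : Set (Fin n → ZMod p)) →
          ∃ g' : Equiv.Perm (Fin n → ZMod p),
            ⇑g' '' (Mhat : Set (Fin n → ZMod p)) = (Mhat : Set (Fin n → ZMod p)) ∧
            ∀ x ∈ Mhat, Ideal.Quotient.mk I (g' x) = g (Ideal.Quotient.mk I x)) :=
  stmt7_general p hp n
end

section
/- Let p be prime and φ the Frobenius on F_{p^3}. For every F_p-subspace V ⊆ F_{p^3}, there exists λ ∈ F_{p^3}^× such that φ(V) = λ·V. -/
section aux
variable (p : ℕ) [Fact p.Prime]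

local notation "F" => GaloisField p 3
local notation "K" => ZMod p

noncomputable def frobAE : F ≃ₐ[K] F :=
  AlgEquiv.ofRingEquiv (f := frobeniusEquiv F p) (fun c => by
    rw [frobeniusEquiv_def, ← map_pow, ZMod.pow_card])

lemma trace_aeq (σ : F ≃ₐ[K] F) (z : F) :
    Algebra.trace K F (σ z) = Algebra.trace K F z := by
  apply (algebraMap K F).injective
  rw [trace_eq_sum_automorphisms, trace_eq_sum_automorphisms]
  exact Fintype.sum_equiv (Equiv.mulRight σ) _ _ (fun τ => rfl)

lemma trace_frob (z : F) :
    Algebra.trace K F (z ^ p) = Algebra.trace K F z := trace_aeq p (frobAE p) z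

lemma frob_surj (y : F) : ∃ x : F, x ^ p = y :=
  ⟨(frobeniusEquiv F p).symm y, (frobeniusEquiv F p).apply_symm_apply y⟩

end aux

open Pointwise in
/-- For every `𝔽_p`-subspace `V ⊆ 𝔽_{p³}`, there is `λ ∈ 𝔽_{p³}ˣ` with `φ(V) = λ·V`,
where `φ(x) = x^p` is the Frobenius. -/
theorem stmt15 (p : ℕ) [Fact p.Prime]
    (V : Submodule (ZMod p) (GaloisField p 3)) :
    ∃ l : (GaloisField p 3)ˣ,
      (fun x : GaloisField p 3 => x ^ p) '' (V : Set (GaloisField p 3))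
        = (l : GaloisField p 3) • (V : Set (GaloisField p 3)) := by
  classical
  have hp : p.Prime := Fact.out
  have hp0 : p ≠ 0 := hp.ne_zero
  have h3 : Module.finrank (ZMod p) (GaloisField p 3) = 3 :=
    GaloisField.finrank p (by norm_num)
  have hle : Module.finrank (ZMod p) V ≤ 3 := by
    have := V.finrank_le
    rwa [h3] at this
  set d := Module.finrank (ZMod p) V with hd
  clear_value d
  interval_cases d
  · -- V = ⊥
    have hV : V = ⊥ := Submodule.finrank_eq_zero.mp hd.symm
    refine ⟨1, ?_⟩
    subst hV
    simp [Set.smul_set_singleton, zero_pow hp0]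
  · -- dim 1
    obtain ⟨v, hv0, hall⟩ := (finrank_eq_one_iff' (K := ZMod p) (V := V)).mp hd.symm
    have hv0' : (v : GaloisField p 3) ≠ 0 := fun h => hv0 (Subtype.ext h)
    refine ⟨Units.mk0 ((v : GaloisField p 3) ^ (p - 1)) (pow_ne_zero _ hv0'), ?_⟩
    have key : ∀ x ∈ V, x ^ p = (v : GaloisField p 3) ^ (p - 1) * x := by
      intro x hx
      obtain ⟨c, hc⟩ := hall ⟨x, hx⟩
      have hc' : c • (v : GaloisField p 3) = x := congrArg Subtype.val hc
      have hvp : (v : GaloisField p 3) ^ p = (v : GaloisField p 3) ^ (p - 1) * v := by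
        rw [← pow_succ, Nat.sub_add_cancel hp.one_lt.le]
      rw [← hc', Algebra.smul_def, mul_pow, ← map_pow, ZMod.pow_card, hvp]
      ring
    ext y
    constructor
    · rintro ⟨x, hx, rfl⟩
      exact ⟨x, hx, by simpa [smul_eq_mul] using (key x hx).symm⟩
    · rintro ⟨x, hx, rfl⟩
      exact ⟨x, hx, by simpa [smul_eq_mul] using key x hx⟩
  · -- dim 2
    have hq : Module.finrank (ZMod p) (GaloisField p 3 ⧸ V) = 1 := by
      have := Submodule.finrank_quotient_add_finrank V
      omega
    obtain ⟨e⟩ := FiniteDimensional.nonempty_linearEquiv_of_finrank_eq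
      (R := ZMod p) (M := GaloisField p 3 ⧸ V) (M' := ZMod p)
      (by rw [hq, Module.finrank_self])
    set f : GaloisField p 3 →ₗ[ZMod p] ZMod p := e.toLinearMap ∘ₗ V.mkQ with hf
    have hker : LinearMap.ker f = V := by
      rw [hf, LinearMap.ker_comp, LinearEquiv.ker, Submodule.comap_bot, Submodule.ker_mkQ]
    have hVne : V ≠ ⊤ := by
      intro h
      rw [h] at hd
      rw [finrank_top (ZMod p) (GaloisField p 3), h3] at hd
      omega
    have hf0 : f ≠ 0 := by
      intro h
      apply hVne
      rw [← hker, h, LinearMap.ker_zero]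
    have hnd := traceForm_nondegenerate (ZMod p) (GaloisField p 3)
    set a : GaloisField p 3 := ((Algebra.traceForm (ZMod p) (GaloisField p 3)).toDual hnd).symm f
      with haa
    have haf : ∀ x, Algebra.trace (ZMod p) (GaloisField p 3) (a * x) = f x := by
      intro x
      have := LinearMap.BilinForm.apply_toDual_symm_apply (B := Algebra.traceForm (ZMod p)
        (GaloisField p 3)) (hB := hnd) f x
      rwa [Algebra.traceForm_apply] at this
    have ha0 : a ≠ 0 := by
      intro h
      apply hf0
      have := ((Algebra.traceForm (ZMod p) (GaloisField p 3)).toDual hnd).symm.injective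
        (a₁ := f) (a₂ := 0)
      rw [map_zero] at this
      exact this (by rw [← haa, h])
    have hap0 : a ^ p ≠ 0 := pow_ne_zero _ ha0
    have hmem : ∀ x, x ∈ V ↔ Algebra.trace (ZMod p) (GaloisField p 3) (a * x) = 0 := by
      intro x
      rw [haf, ← LinearMap.mem_ker, hker]
    refine ⟨Units.mk0 (a * (a ^ p)⁻¹) (mul_ne_zero ha0 (inv_ne_zero hap0)), ?_⟩
    ext y
    simp only [Set.mem_image, Set.mem_smul_set, Units.val_mk0, SetLike.mem_coe, smul_eq_mul]
    constructor
    · rintro ⟨x, hx, rfl⟩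
      refine ⟨(a * (a ^ p)⁻¹)⁻¹ * x ^ p, ?_, by field_simp; try ring⟩
      rw [hmem]
      have : a * ((a * (a ^ p)⁻¹)⁻¹ * x ^ p) = a ^ p * x ^ p := by field_simp; try ring
      rw [this, ← mul_pow, trace_frob]
      exact (hmem x).mp hx
    · rintro ⟨z, hz, rfl⟩
      obtain ⟨x, hx⟩ := frob_surj p (a * (a ^ p)⁻¹ * z)
      refine ⟨x, ?_, by rw [hx]⟩
      rw [hmem, ← trace_frob p (a * x), mul_pow, hx]
      have : a ^ p * (a * (a ^ p)⁻¹ * z) = a * z := by field_simp; try ring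
      rw [this]
      exact (hmem z).mp hz
  · -- V = ⊤
    have hV : V = ⊤ := Submodule.eq_top_of_finrank_eq (hd.symm.trans h3.symm)
    refine ⟨1, ?_⟩
    subst hV
    have : Set.range (fun x : GaloisField p 3 => x ^ p) = Set.univ :=
      Set.range_eq_univ.mpr fun y => frob_surj p y
    simp [this, one_smul]
end

section
/- Let p > 2 be prime and n ≥ 1. Suppose that for every α ∈ F_{p^n} there exist a, b, c, d ∈ F_p, not all zero, with α^p·(cα + d) = aα + b. Then p^n ≤ (p(p+1))^2; in particular n ≤ 4. -/
/-!
Up to a nonzero scalar, a relation `α^q (cα + d) = aα + b` over `𝔽_q` with `(c, d) ≠ (0, 0)`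
is `α^q (α + d) = aα + b` or `α^q = aα + b`, and when `(c, d) = (0, 0)` the element `α` lies
in `𝔽_q`, hence is a root of `X^q - X`. So every `α` is a root of one of `q²(q + 1)` nonzero
polynomials of degree at most `q + 1`, which gives `|L| ≤ q²(q + 1)²`.
-/

open Polynomial

namespace FrobeniusRelation

variable {K : Type*} [Field K]

noncomputable def relPoly (q : ℕ) (a b c d : K) : K[X] :=
  X ^ q * (C c * X + C d) - (C a * X + C b)

/-- The relation polynomials normalised by `c = 1` or by `(c, d) = (0, 1)`: the `Option K`
coordinate is the point `(c : d)` of the projective line. -/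
noncomputable def normPoly (q : ℕ) : K × K × Option K → K[X]
  | (a, b, some d) => relPoly q a b 1 d
  | (a, b, none) => relPoly q a b 0 1

theorem relPoly_mul (q : ℕ) (u a b c d : K) :
    relPoly q (u * a) (u * b) (u * c) (u * d) = C u * relPoly q a b c d := by
  simp only [relPoly, C_mul]
  ring

theorem natDegree_relPoly_le (q : ℕ) (a b c d : K) : (relPoly q a b c d).natDegree ≤ q + 1 := by
  unfold relPoly
  compute_degree!

theorem natDegree_normPoly_le (q : ℕ) (t : K × K × Option K) :
    (normPoly q t).natDegree ≤ q + 1 := by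
  rcases t with ⟨a, b, _ | d⟩ <;> exact natDegree_relPoly_le q _ _ _ _

theorem coeff_relPoly_succ (q : ℕ) (hq : q ≠ 0) (a b c d : K) :
    (relPoly q a b c d).coeff (q + 1) = c := by
  rw [relPoly, mul_add, mul_left_comm, ← pow_succ, mul_comm (X ^ q)]
  simp [coeff_C, hq]

theorem coeff_relPoly_zero_left (q : ℕ) (hq : 2 ≤ q) (a b d : K) :
    (relPoly q a b 0 d).coeff q = d := by
  simp [relPoly, coeff_X, coeff_C, show 1 ≠ q by omega, show q ≠ 0 by omega]

theorem normPoly_ne_zero (q : ℕ) (hq : 2 ≤ q) (t : K × K × Option K) : normPoly q t ≠ 0 := by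
  rcases t with ⟨a, b, _ | d⟩ <;> intro h <;> rw [normPoly] at h
  · simpa [h] using coeff_relPoly_zero_left q hq a b (1 : K)
  · simpa [h] using coeff_relPoly_succ q (by omega) a b (1 : K) d

variable {L : Type*} [Field L] [Algebra K L]

theorem aeval_relPoly (q : ℕ) (a b c d : K) (α : L) :
    aeval α (relPoly q a b c d) =
      α ^ q * (algebraMap K L c * α + algebraMap K L d) -
        (algebraMap K L a * α + algebraMap K L b) := by
  simp [relPoly, aeval_def]

theorem exists_aeval_normPoly_eq_zero_of_ne (q : ℕ) {a b c d : K} (hcd : ¬(c = 0 ∧ d = 0))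
    {α : L} (hα : aeval α (relPoly q a b c d) = 0) :
    ∃ t : K × K × Option K, aeval α (normPoly q t) = 0 := by
  have root_of_mul {u : K} (hu : u ≠ 0) {a' b' c' d' : K}
      (h : relPoly q a b c d = relPoly q (u * a') (u * b') (u * c') (u * d')) :
      aeval α (relPoly q a' b' c' d') = 0 := by
    rwa [h, relPoly_mul, map_mul, aeval_C, mul_eq_zero,
      or_iff_right ((_root_.map_ne_zero _).mpr hu)] at hα
  by_cases hc : c = 0
  · have hd : d ≠ 0 := fun hd => hcd ⟨hc, hd⟩
    refine ⟨(a / d, b / d, none), root_of_mul hd ?_⟩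
    simp [hc, mul_div_cancel₀ _ hd]
  · refine ⟨(a / c, b / c, some (d / c)), root_of_mul hc ?_⟩
    simp [mul_div_cancel₀ _ hc]

variable [Fintype K]

theorem exists_aeval_normPoly_eq_zero {q : ℕ} (hq : Fintype.card K = q) {α : L} {a b c d : K}
    (habcd : ¬(a = 0 ∧ b = 0 ∧ c = 0 ∧ d = 0))
    (hα : α ^ q * (algebraMap K L c * α + algebraMap K L d) =
      algebraMap K L a * α + algebraMap K L b) :
    ∃ t : K × K × Option K, aeval α (normPoly q t) = 0 := by
  by_cases hcd : c = 0 ∧ d = 0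
  · obtain ⟨rfl, rfl⟩ := hcd
    have ha : a ≠ 0 := by
      rintro rfl
      exact habcd ⟨rfl, by simpa using hα.symm, rfl, rfl⟩
    have hα_mem : α = algebraMap K L (-b / a) := by
      rw [map_div₀, map_neg, eq_div_iff ((_root_.map_ne_zero _).mpr ha)]
      simp only [map_zero, zero_mul, add_zero, mul_zero] at hα
      linear_combination -hα
    -- `α ∈ 𝔽_q` is a root of `X^q - X`, the relation polynomial with `(a, b, c, d) = (1, 0, 0, 1)`.
    refine ⟨(1, 0, none), ?_⟩
    rw [normPoly, aeval_relPoly, hα_mem, ← map_pow, ← hq, FiniteField.pow_card]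
    simp
  · exact exists_aeval_normPoly_eq_zero_of_ne q hcd (by rw [aeval_relPoly, hα, sub_self])

end FrobeniusRelation

theorem Polynomial.nat_card_le_card_mul_of_forall_exists_isRoot {ι L : Type*} [Fintype ι]
    [Field L] [Finite L] {P : ι → L[X]} {m : ℕ} (hP : ∀ i, P i ≠ 0)
    (hdeg : ∀ i, (P i).natDegree ≤ m) (hroot : ∀ x, ∃ i, (P i).IsRoot x) :
    Nat.card L ≤ Fintype.card ι * m := by
  classical
  have := Fintype.ofFinite L
  have hcover : (Finset.univ : Finset L) ⊆ Finset.univ.biUnion fun i => (P i).roots.toFinset := by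
    intro x _
    obtain ⟨i, hi⟩ := hroot x
    exact Finset.mem_biUnion.mpr ⟨i, Finset.mem_univ i, by simpa [hP i] using hi⟩
  rw [Nat.card_eq_fintype_card, ← Finset.card_univ, ← Finset.card_univ (α := ι)]
  refine (Finset.card_le_card hcover).trans (Finset.card_biUnion_le_card_mul _ _ _ fun i _ => ?_)
  exact (Multiset.toFinset_card_le _).trans ((card_roots' _).trans (hdeg i))

open FrobeniusRelation in
theorem nat_card_le_of_forall_frobenius_relation {K L : Type*} [Field K] [Fintype K] [Field L]
    [Finite L] [Algebra K L] {q : ℕ} (hK : Fintype.card K = q) (hq : 2 ≤ q)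
    (H : ∀ α : L, ∃ a b c d : K, ¬(a = 0 ∧ b = 0 ∧ c = 0 ∧ d = 0) ∧
      α ^ q * (algebraMap K L c * α + algebraMap K L d) = algebraMap K L a * α + algebraMap K L b) :
    Nat.card L ≤ (q * (q + 1)) ^ 2 := by
  have hcover : ∀ α : L, ∃ t, ((normPoly q t).map (algebraMap K L)).IsRoot α := by
    intro α
    obtain ⟨a, b, c, d, habcd, hα⟩ := H α
    simpa [IsRoot, eval_map_algebraMap] using exists_aeval_normPoly_eq_zero hK habcd hα
  have hbound := nat_card_le_card_mul_of_forall_exists_isRoot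
    (fun t => Polynomial.map_ne_zero (normPoly_ne_zero q hq t))
    (fun t => (natDegree_map_le).trans (natDegree_normPoly_le q t)) hcover
  simp only [Fintype.card_prod, Fintype.card_option, hK] at hbound
  exact hbound.trans_eq (by ring)

theorem le_four_of_pow_le_sq_mul_add_one {p n : ℕ} (hp : 3 ≤ p) (h : p ^ n ≤ (p * (p + 1)) ^ 2) :
    n ≤ 4 := by
  have hlt : (p * (p + 1)) ^ 2 < p ^ 5 := by nlinarith [Nat.mul_le_mul hp hp]
  exact Nat.lt_succ_iff.mp ((Nat.pow_lt_pow_iff_right (by omega)).mp (h.trans_lt hlt))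

/-- If `p > 2` is prime, `n ≥ 1`, and every `α ∈ 𝔽_{pⁿ}` satisfies a relation
`α^p·(cα + d) = aα + b` with `a, b, c, d ∈ 𝔽_p` not all zero, then
`pⁿ ≤ (p(p+1))²`; in particular `n ≤ 4`. -/
theorem stmt16 (p : ℕ) [Fact p.Prime] (hp : 2 < p) (n : ℕ) (hn : 1 ≤ n)
    (H : ∀ α : GaloisField p n, ∃ a b c d : ZMod p,
      ¬(a = 0 ∧ b = 0 ∧ c = 0 ∧ d = 0) ∧
      α ^ p * (algebraMap (ZMod p) (GaloisField p n) c * α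
                + algebraMap (ZMod p) (GaloisField p n) d)
        = algebraMap (ZMod p) (GaloisField p n) a * α
            + algebraMap (ZMod p) (GaloisField p n) b) :
    p ^ n ≤ (p * (p + 1)) ^ 2 ∧ n ≤ 4 := by
  have hbound : p ^ n ≤ (p * (p + 1)) ^ 2 := by
    rw [← GaloisField.card p n (by omega)]
    exact nat_card_le_of_forall_frobenius_relation (ZMod.card p) (by omega) H
  exact ⟨hbound, le_four_of_pow_le_sq_mul_add_one hp hbound⟩
end

section
/- Let p be an odd prime and α ∈ F_{p^4} of multiplicative order p^2 + 1 satisfying α^p = (aα + b)/(α + d) for some a, b, d ∈ F_p. Then ad + 1 = 0, a² + b = 0, ab − d = 0, and consequently a = −1/d, b = −1/d², and d⁴ = 1. -/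
/-!
Let `q = #K` and `σ = (· ^ q)`, so that `σ² α = α⁻¹` when `α` has order `q² + 1`. Applying `σ` to
`α ^ q (α + d) = a α + b` and eliminating `α ^ (q + 1)` gives
`(ad + 1) α ^ q = (a² + b) α + (ab - d)`, so it suffices that `1, α, α ^ q` are `K`-linearly
independent. Applying `σ` to a relation `u α ^ q + s α + t = 0` and eliminating `α ^ q` yields
`s² α² + (s - u) t α - u² = 0`; this quadratic over `K` also vanishes at the distinct points `σ α`
and `σ² α` (distinct because `α ^ q² ≠ α`), so it is zero and `u = s = t = 0`.
-/

open Polynomial FiniteField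

section

variable {K L : Type*} [Field K] [Fintype K] [Field L] [Algebra K L] {q : ℕ}

theorem Polynomial.eq_zero_of_natDegree_le_two_of_aeval_eq_zero (hq : Fintype.card K = q)
    {x : L} (hx : x ^ q ^ 2 ≠ x) {Q : K[X]} (hQ : Q.natDegree ≤ 2) (hQx : aeval x Q = 0) :
    Q = 0 := by
  classical
  subst hq
  have frob : ∀ y : L, frobeniusAlgHom K L y = y ^ Fintype.card K := fun _ => rfl
  have hx₁ : x ^ Fintype.card K ≠ x := fun h => hx (by rw [sq, pow_mul, h, h])
  have hx₂ : x ^ Fintype.card K ^ 2 ≠ x ^ Fintype.card K := by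
    rw [sq, pow_mul, ← frob, ← frob]
    exact fun h => hx₁ ((frobeniusAlgHom K L).injective h)
  have root : ∀ n, aeval (x ^ Fintype.card K ^ n) Q = 0 := by
    intro n
    induction n with
    | zero => simpa using hQx
    | succ n ih => rw [pow_succ, pow_mul, ← frob, aeval_algHom_apply, ih, map_zero]
  apply map_injective (algebraMap K L) (algebraMap K L).injective
  rw [Polynomial.map_zero]
  refine eq_zero_of_natDegree_lt_card_of_eval_eq_zero' _
    {x, x ^ Fintype.card K, x ^ Fintype.card K ^ 2} ?_ ?_
  · simp only [Finset.mem_insert, Finset.mem_singleton, eval_map_algebraMap]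
    rintro y (rfl | rfl | rfl)
    · simpa using root 0
    · simpa using root 1
    · exact root 2
  · rw [natDegree_map, Finset.card_eq_three.mpr ⟨_, _, _, hx₁.symm, hx.symm, hx₂.symm, rfl⟩]
    omega

theorem eq_zero_of_algebraMap_mul_pow_card_add_eq_zero (hq : Fintype.card K = q) {α : L}
    (hnorm : α ^ q ^ 2 * α = 1) (hα : α ^ q ^ 2 ≠ α) {u s t : K}
    (h : algebraMap K L u * α ^ q + algebraMap K L s * α + algebraMap K L t = 0) :
    u = 0 ∧ s = 0 ∧ t = 0 := by
  have hσ : algebraMap K L u * α ^ q ^ 2 + algebraMap K L s * α ^ q + algebraMap K L t = 0 := by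
    have := congrArg (frobeniusAlgHom K L) h
    simp only [map_add, map_mul, map_zero, AlgHom.commutes, coe_frobeniusAlgHom, hq] at this
    rwa [sq, pow_mul]
  have hQ : aeval α (C (s ^ 2) * X ^ 2 + C ((s - u) * t) * X - C (u ^ 2)) = 0 := by
    simp only [map_add, map_sub, map_mul, map_pow, aeval_C, aeval_X]
    linear_combination (-α) * (algebraMap K L u * hσ - algebraMap K L s * h)
      + algebraMap K L u ^ 2 * hnorm
  have hQ0 := eq_zero_of_natDegree_le_two_of_aeval_eq_zero hq hα (by compute_degree) hQ
  have hs : s = 0 := by simpa [-map_pow, coeff_X] using congrArg (coeff · 2) hQ0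
  have hu : u = 0 := by simpa [-map_pow] using congrArg (coeff · 0) hQ0
  subst hs hu
  simpa using h

theorem coeffs_eq_zero_of_pow_card_mul_add_eq (hq : Fintype.card K = q) {α : L}
    (hnorm : α ^ q ^ 2 * α = 1) (hα : α ^ q ^ 2 ≠ α) {a b d : K}
    (h : α ^ q * (α + algebraMap K L d) = algebraMap K L a * α + algebraMap K L b) :
    a * d + 1 = 0 ∧ a ^ 2 + b = 0 ∧ a * b - d = 0 := by
  have hσ : α ^ q ^ 2 * (α ^ q + algebraMap K L d) =
      algebraMap K L a * α ^ q + algebraMap K L b := by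
    have := congrArg (frobeniusAlgHom K L) h
    simp only [map_add, map_mul, AlgHom.commutes, coe_frobeniusAlgHom, hq] at this
    rwa [sq, pow_mul]
  have hlin : algebraMap K L (a * d + 1) * α ^ q + algebraMap K L (-(a ^ 2 + b)) * α
      + algebraMap K L (-(a * b - d)) = 0 := by
    simp only [map_add, map_mul, map_neg, map_sub, map_pow, map_one]
    linear_combination α * hσ - (α ^ q + algebraMap K L d) * hnorm + algebraMap K L a * h
  obtain ⟨h₁, h₂, h₃⟩ := eq_zero_of_algebraMap_mul_pow_card_add_eq_zero hq hnorm hα hlin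
  exact ⟨h₁, neg_eq_zero.mp h₂, neg_eq_zero.mp h₃⟩

end

section

variable {M : Type*} [Monoid M] {x : M} {n : ℕ}

theorem pow_mul_self_eq_one_of_orderOf_eq_add_one (h : orderOf x = n + 1) : x ^ n * x = 1 := by
  rw [← pow_succ, ← h, pow_orderOf_eq_one]

theorem pow_ne_self_of_orderOf_eq_add_one (h : orderOf x = n + 1) (hn : 1 < n) : x ^ n ≠ x := by
  intro hx
  have hx2 : x ^ 2 = 1 := by rw [sq, ← pow_mul_self_eq_one_of_orderOf_eq_add_one h, hx]
  have := Nat.le_of_dvd two_pos (h ▸ orderOf_dvd_of_pow_eq_one hx2)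
  omega

end

theorem eq_neg_inv_of_mul_add_one_eq_zero {F : Type*} [Field F] {a b d : F}
    (h₁ : a * d + 1 = 0) (h₂ : a ^ 2 + b = 0) (h₃ : a * b - d = 0) :
    a = -d⁻¹ ∧ b = -(d ^ 2)⁻¹ ∧ d ^ 4 = 1 := by
  have hd : d ≠ 0 := by rintro rfl; simp at h₁
  have ha : a = -d⁻¹ := by field_simp; linear_combination h₁
  have hb : b = -(d ^ 2)⁻¹ := by field_simp; linear_combination d ^ 2 * h₂ - (a * d - 1) * h₁
  refine ⟨ha, hb, ?_⟩
  rw [ha, hb] at h₃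
  field_simp at h₃
  linear_combination -h₃

theorem stmt18_general (p : ℕ) [Fact p.Prime]
    (α : GaloisField p 4) (hα : orderOf α = p ^ 2 + 1)
    (a b d : ZMod p)
    (hden : α + algebraMap (ZMod p) (GaloisField p 4) d ≠ 0)
    (heq : α ^ p = (algebraMap (ZMod p) (GaloisField p 4) a * α
                      + algebraMap (ZMod p) (GaloisField p 4) b)
                    / (α + algebraMap (ZMod p) (GaloisField p 4) d)) :
    a * d + 1 = 0 ∧ a ^ 2 + b = 0 ∧ a * b - d = 0 ∧
      a = -d⁻¹ ∧ b = -(d ^ 2)⁻¹ ∧ d ^ 4 = 1 := by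
  have h : α ^ p * (α + algebraMap (ZMod p) (GaloisField p 4) d) =
      algebraMap (ZMod p) (GaloisField p 4) a * α + algebraMap (ZMod p) (GaloisField p 4) b := by
    rw [heq, div_mul_cancel₀ _ hden]
  have hp : 1 < p ^ 2 := Nat.one_lt_pow two_ne_zero (Fact.out : p.Prime).one_lt
  obtain ⟨h₁, h₂, h₃⟩ := coeffs_eq_zero_of_pow_card_mul_add_eq (ZMod.card p)
    (pow_mul_self_eq_one_of_orderOf_eq_add_one hα) (pow_ne_self_of_orderOf_eq_add_one hα hp) h
  exact ⟨h₁, h₂, h₃, eq_neg_inv_of_mul_add_one_eq_zero h₁ h₂ h₃⟩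

/-- If `p` is an odd prime and `α ∈ 𝔽_{p⁴}` has multiplicative order `p² + 1` and
satisfies `α^p = (aα + b)/(α + d)` with `a, b, d ∈ 𝔽_p`, then `ad + 1 = 0`,
`a² + b = 0`, `ab − d = 0`, and consequently `a = −1/d`, `b = −1/d²`, `d⁴ = 1`. -/
theorem stmt18 (p : ℕ) [Fact p.Prime] (hp : Odd p)
    (α : GaloisField p 4) (hα : orderOf α = p ^ 2 + 1)
    (a b d : ZMod p)
    (hden : α + algebraMap (ZMod p) (GaloisField p 4) d ≠ 0)
    (heq : α ^ p = (algebraMap (ZMod p) (GaloisField p 4) a * α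
                      + algebraMap (ZMod p) (GaloisField p 4) b)
                    / (α + algebraMap (ZMod p) (GaloisField p 4) d)) :
    a * d + 1 = 0 ∧ a ^ 2 + b = 0 ∧ a * b - d = 0 ∧
      a = -d⁻¹ ∧ b = -(d ^ 2)⁻¹ ∧ d ^ 4 = 1 :=
  stmt18_general p α hα a b d hden heq
end
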